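/- arXiv:2002.08491 — 2 statements merged into one kernel-verified Lean document; each statement's English description precedes it below -/
import Mathlib

section
/- Let A = A^T ∈ R^{n×n} with eigendecomposition A = V Λ V^T + V_⊥ Λ_⊥ V_⊥^T, where V ∈ O_{n,r} and Λ, Λ_⊥ diagonal. Let Q_⊥ ∈ O_{n,n−r} be arbitrary with orthonormal columns. Then ‖Q_⊥^T A Q_⊥‖₂ ≤ |λ₁(A)| · ‖Q_⊥^T V‖₂² + max_i |(Λ_⊥)_{ii}|. -/
open Matrix BigOperators

/-- ℓ2 norm of the i-th row of a matrix. -/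
noncomputable def row2 {m n : ℕ} (A : Matrix (Fin m) (Fin n) ℝ) (i : Fin m) : ℝ :=
  Real.sqrt (∑ j, (A i j) ^ 2)

/-- The ℓ2→∞ norm: maximum row ℓ2 norm. -/
noncomputable def norm2inf {m n : ℕ} (A : Matrix (Fin m) (Fin n) ℝ) : ℝ :=
  ⨆ i, row2 A i

/-- The ℓ∞→ℓ∞ operator norm: maximum row ℓ1 norm. -/
noncomputable def normInfOp {m n : ℕ} (A : Matrix (Fin m) (Fin n) ℝ) : ℝ :=
  ⨆ i, ∑ j, |A i j|

/-- The spectral (ℓ2 operator) norm: sup over unit vectors of ‖Ax‖₂. -/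
noncomputable def specNorm {m n : ℕ} (A : Matrix (Fin m) (Fin n) ℝ) : ℝ :=
  ⨆ x : {x : Fin n → ℝ // ∑ j, (x j) ^ 2 = 1}, Real.sqrt (∑ i, (A.mulVec x.1 i) ^ 2)

/-- The Frobenius norm. -/
noncomputable def frobNorm {m n : ℕ} (A : Matrix (Fin m) (Fin n) ℝ) : ℝ :=
  Real.sqrt (∑ i, ∑ j, (A i j) ^ 2)

/-- The smallest singular value: inf over unit vectors of ‖Mx‖₂. -/
noncomputable def sigmaMin {r : ℕ} (M : Matrix (Fin r) (Fin r) ℝ) : ℝ :=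
  ⨅ x : {x : Fin r → ℝ // ∑ j, (x j) ^ 2 = 1}, Real.sqrt (∑ i, (M.mulVec x.1 i) ^ 2)

/-- The ℓ2→∞ subspace distance: inf over orthogonal Z of ‖Q - V Z‖_{2→∞}. -/
noncomputable def dist2inf {n r : ℕ} (Q V : Matrix (Fin n) (Fin r) ℝ) : ℝ :=
  ⨅ Z : {Z : Matrix (Fin r) (Fin r) ℝ // Zᵀ * Z = 1}, norm2inf (Q - V * Z.1)
open scoped Matrix.Norms.L2Operator

lemma euclid_norm {k : ℕ} (x : EuclideanSpace ℝ (Fin k)) :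
    ‖x‖ = Real.sqrt (∑ i, x i ^ 2) := by
  rw [EuclideanSpace.norm_eq]
  congr 1
  refine Finset.sum_congr rfl fun i _ => ?_
  rw [Real.norm_eq_abs, sq_abs]

lemma le_l2 {m n : ℕ} (A : Matrix (Fin m) (Fin n) ℝ) (x : Fin n → ℝ) :
    Real.sqrt (∑ i, (A.mulVec x i) ^ 2) ≤ ‖A‖ * Real.sqrt (∑ j, (x j) ^ 2) := by
  have h := Matrix.l2_opNorm_mulVec A ((EuclideanSpace.equiv (Fin n) ℝ).symm x)
  simpa [euclid_norm] using h

lemma l2_le_of {m n : ℕ} (A : Matrix (Fin m) (Fin n) ℝ) (c : ℝ) (hc : 0 ≤ c)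
    (h : ∀ x : Fin n → ℝ,
      Real.sqrt (∑ i, (A.mulVec x i) ^ 2) ≤ c * Real.sqrt (∑ j, (x j) ^ 2)) :
    ‖A‖ ≤ c := by
  rw [Matrix.l2_opNorm_def]
  refine ContinuousLinearMap.opNorm_le_bound _ hc fun y => ?_
  have hy : y = (EuclideanSpace.equiv (Fin n) ℝ).symm (fun i => y i) := rfl
  calc ‖(Matrix.toEuclideanLin.trans LinearMap.toContinuousLinearMap A) y‖
      = Real.sqrt (∑ i, (A.mulVec (fun j => y j) i) ^ 2) := by
        rw [hy]; exact euclid_norm _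
    _ ≤ c * Real.sqrt (∑ j, (y j) ^ 2) := h _
    _ = c * ‖y‖ := by rw [euclid_norm]

lemma specNorm_eq {m n : ℕ} (A : Matrix (Fin m) (Fin n) ℝ) : specNorm A = ‖A‖ := by
  have hbdd : BddAbove (Set.range fun x : {x : Fin n → ℝ // ∑ j, (x j) ^ 2 = 1} =>
      Real.sqrt (∑ i, (A.mulVec x.1 i) ^ 2)) := by
    refine ⟨‖A‖, ?_⟩
    rintro y ⟨x, rfl⟩
    have := le_l2 A x.1
    simpa [x.2] using this
  refine le_antisymm ?_ ?_
  · refine Real.iSup_le (fun x => ?_) (norm_nonneg _)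
    have := le_l2 A x.1
    simpa [x.2] using this
  · have hnn : 0 ≤ specNorm A := Real.iSup_nonneg fun x => Real.sqrt_nonneg _
    refine l2_le_of A _ hnn fun x => ?_
    rcases eq_or_ne (∑ j, (x j) ^ 2) 0 with hs | hs
    · have hx : ∀ j, x j = 0 := by
        intro j
        have := (Finset.sum_eq_zero_iff_of_nonneg (fun i _ => sq_nonneg (x i))).mp hs j
          (Finset.mem_univ j)
        exact pow_eq_zero_iff (n := 2) (by norm_num) |>.mp this
      have hx0 : x = 0 := funext hx
      subst hx0
      simp [Matrix.mulVec_zero]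
    · have hpos : 0 < ∑ j, (x j) ^ 2 :=
        lt_of_le_of_ne (Finset.sum_nonneg fun i _ => sq_nonneg _) (Ne.symm hs)
    -- scale
      set c : ℝ := Real.sqrt (∑ j, (x j) ^ 2) with hc
      have hcpos : 0 < c := Real.sqrt_pos.mpr hpos
      set u : Fin n → ℝ := c⁻¹ • x with hu
      have hsum : ∑ j, (u j) ^ 2 = 1 := by
        simp only [hu, Pi.smul_apply, smul_eq_mul, mul_pow, ← Finset.mul_sum]
        rw [hc, inv_pow, Real.sq_sqrt hpos.le, inv_mul_cancel₀ hpos.ne']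
      have hle : Real.sqrt (∑ i, (A.mulVec u i) ^ 2) ≤ specNorm A :=
        le_ciSup hbdd (⟨u, hsum⟩ : {x : Fin n → ℝ // ∑ j, (x j) ^ 2 = 1})
      have hxu : x = c • u := by
        rw [hu, smul_smul, mul_inv_cancel₀ hcpos.ne', one_smul]
      have hmv : A.mulVec x = c • A.mulVec u := by rw [hxu, Matrix.mulVec_smul]
      have : Real.sqrt (∑ i, (A.mulVec x i) ^ 2)
          = c * Real.sqrt (∑ i, (A.mulVec u i) ^ 2) := by
        rw [hmv]
        simp only [Pi.smul_apply, smul_eq_mul, mul_pow, ← Finset.mul_sum]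
        rw [Real.sqrt_mul (sq_nonneg c), Real.sqrt_sq hcpos.le]
      rw [this]
      calc c * Real.sqrt (∑ i, (A.mulVec u i) ^ 2) ≤ c * specNorm A := by
            exact mul_le_mul_of_nonneg_left hle hcpos.le
        _ = specNorm A * c := mul_comm _ _

lemma real_conjT {a b : ℕ} (A : Matrix (Fin a) (Fin b) ℝ) : Aᴴ = Aᵀ := by
  ext i j; simp [Matrix.conjTranspose_apply]

lemma norm_transpose {a b : ℕ} (A : Matrix (Fin a) (Fin b) ℝ) : ‖Aᵀ‖ = ‖A‖ := by
  rw [← real_conjT, Matrix.l2_opNorm_conjTranspose]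

lemma norm_one_le {k : ℕ} : ‖(1 : Matrix (Fin k) (Fin k) ℝ)‖ ≤ 1 := by
  refine l2_le_of _ 1 zero_le_one fun x => ?_
  simp [Matrix.one_mulVec]

lemma norm_le_one_of_orth {a b : ℕ} (Q : Matrix (Fin a) (Fin b) ℝ) (hQ : Qᵀ * Q = 1) :
    ‖Q‖ ≤ 1 := by
  have h := Matrix.l2_opNorm_conjTranspose_mul_self Q
  rw [real_conjT, hQ] at h
  nlinarith [norm_nonneg Q, norm_one_le (k := b)]

lemma norm_diag_le {k : ℕ} (d : Fin k → ℝ) :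
    ‖Matrix.diagonal d‖ ≤ ⨆ i, |d i| := by
  set s : ℝ := ⨆ i, |d i| with hs
  have hsnn : 0 ≤ s := Real.iSup_nonneg fun i => abs_nonneg _
  refine l2_le_of _ s hsnn fun x => ?_
  have hb : ∀ i, |d i| ≤ s := fun i =>
    le_ciSup (f := fun i => |d i|) (Set.Finite.bddAbove (Set.finite_range _)) i
  have key : ∑ i, ((Matrix.diagonal d).mulVec x i) ^ 2 ≤ s ^ 2 * ∑ j, (x j) ^ 2 := by
    rw [Finset.mul_sum]
    refine Finset.sum_le_sum fun i _ => ?_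
    have : (Matrix.diagonal d).mulVec x i = d i * x i := by
      simp [Matrix.mulVec_diagonal]
    rw [this, mul_pow]
    have : (d i) ^ 2 ≤ s ^ 2 := by
      have := hb i
      nlinarith [abs_nonneg (d i), sq_abs (d i)]
    nlinarith [sq_nonneg (x i)]
  calc Real.sqrt (∑ i, ((Matrix.diagonal d).mulVec x i) ^ 2)
      ≤ Real.sqrt (s ^ 2 * ∑ j, (x j) ^ 2) := Real.sqrt_le_sqrt key
    _ = s * Real.sqrt (∑ j, (x j) ^ 2) := by
        rw [Real.sqrt_mul (sq_nonneg s), Real.sqrt_sq hsnn]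


/-- ‖Q_⊥ᵀ A Q_⊥‖₂ ≤ |λ₁(A)| ‖Q_⊥ᵀ V‖₂² + max_i |(Λ_⊥)_{ii}|. -/
theorem residual_block_spec_bound {n r : ℕ}
    (A : Matrix (Fin n) (Fin n) ℝ)
    (V : Matrix (Fin n) (Fin r) ℝ) (Vp : Matrix (Fin n) (Fin (n - r)) ℝ)
    (Qp : Matrix (Fin n) (Fin (n - r)) ℝ)
    (dV : Fin r → ℝ) (dP : Fin (n - r) → ℝ)
    (hV : Vᵀ * V = 1) (hVp : Vpᵀ * Vp = 1) (hperp : Vᵀ * Vp = 0)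
    (hcomplete : V * Vᵀ + Vp * Vpᵀ = 1)
    (hA : A = V * Matrix.diagonal dV * Vᵀ + Vp * Matrix.diagonal dP * Vpᵀ)
    (hQp : Qpᵀ * Qp = 1) :
    specNorm (Qpᵀ * A * Qp)
      ≤ (⨆ i, |dV i|) * (specNorm (Qpᵀ * V)) ^ 2 + ⨆ i, |dP i| := by
  rw [specNorm_eq, specNorm_eq]
  set M := Qpᵀ * V with hM
  set N := Qpᵀ * Vp with hN
  have hexp : Qpᵀ * A * Qp = M * Matrix.diagonal dV * Mᵀ + N * Matrix.diagonal dP * Nᵀ := by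
    rw [hA, hM, hN]
    simp only [Matrix.transpose_mul, Matrix.transpose_transpose, Matrix.mul_add,
      Matrix.add_mul, Matrix.mul_assoc]
  rw [hexp]
  have sV : (0:ℝ) ≤ ⨆ i, |dV i| := Real.iSup_nonneg fun i => abs_nonneg _
  have sP : (0:ℝ) ≤ ⨆ i, |dP i| := Real.iSup_nonneg fun i => abs_nonneg _
  have hMnn : (0:ℝ) ≤ ‖M‖ := norm_nonneg _
  have hQle : ‖Qp‖ ≤ 1 := norm_le_one_of_orth Qp hQp
  have hVple : ‖Vp‖ ≤ 1 := norm_le_one_of_orth Vp hVp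
  have hNle : ‖N‖ ≤ 1 := by
    calc ‖N‖ ≤ ‖Qpᵀ‖ * ‖Vp‖ := Matrix.l2_opNorm_mul _ _
      _ ≤ 1 * 1 := by
          rw [norm_transpose]
          exact mul_le_mul hQle hVple (norm_nonneg _) zero_le_one
      _ = 1 := one_mul 1
  have hNnn : (0:ℝ) ≤ ‖N‖ := norm_nonneg _
  have t1 : ‖M * Matrix.diagonal dV * Mᵀ‖ ≤ (⨆ i, |dV i|) * ‖M‖ ^ 2 := by
    calc ‖M * Matrix.diagonal dV * Mᵀ‖
        ≤ ‖M * Matrix.diagonal dV‖ * ‖Mᵀ‖ := Matrix.l2_opNorm_mul _ _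
      _ ≤ ‖M‖ * ‖Matrix.diagonal dV‖ * ‖Mᵀ‖ :=
          mul_le_mul_of_nonneg_right (Matrix.l2_opNorm_mul _ _) (norm_nonneg _)
      _ = ‖M‖ * ‖Matrix.diagonal dV‖ * ‖M‖ := by rw [norm_transpose]
      _ ≤ ‖M‖ * (⨆ i, |dV i|) * ‖M‖ := by
          have := norm_diag_le dV
          have h1 : ‖M‖ * ‖Matrix.diagonal dV‖ ≤ ‖M‖ * (⨆ i, |dV i|) :=
            mul_le_mul_of_nonneg_left this hMnn
          exact mul_le_mul_of_nonneg_right h1 hMnn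
      _ = (⨆ i, |dV i|) * ‖M‖ ^ 2 := by ring
  have t2 : ‖N * Matrix.diagonal dP * Nᵀ‖ ≤ ⨆ i, |dP i| := by
    calc ‖N * Matrix.diagonal dP * Nᵀ‖
        ≤ ‖N‖ * ‖Matrix.diagonal dP‖ * ‖Nᵀ‖ := by
          refine le_trans (Matrix.l2_opNorm_mul _ _) ?_
          exact mul_le_mul_of_nonneg_right (Matrix.l2_opNorm_mul _ _) (norm_nonneg _)
      _ = ‖N‖ * ‖Matrix.diagonal dP‖ * ‖N‖ := by rw [norm_transpose]
      _ ≤ 1 * (⨆ i, |dP i|) * 1 := by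
          have hd := norm_diag_le dP
          have hdnn : (0:ℝ) ≤ ‖Matrix.diagonal dP‖ := norm_nonneg _
          nlinarith [mul_nonneg (sub_nonneg.mpr hNle) hdnn,
            mul_nonneg (sub_nonneg.mpr hNle) (mul_nonneg hNnn hdnn)]
      _ = ⨆ i, |dP i| := by ring
  calc ‖M * Matrix.diagonal dV * Mᵀ + N * Matrix.diagonal dP * Nᵀ‖
      ≤ ‖M * Matrix.diagonal dV * Mᵀ‖ + ‖N * Matrix.diagonal dP * Nᵀ‖ := norm_add_le _ _
    _ ≤ (⨆ i, |dV i|) * ‖M‖ ^ 2 + ⨆ i, |dP i| := add_le_add t1 t2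
end

section
/- Let V ∈ R^{n×r} with orthonormal columns and Q_t ∈ R^{n×r} with orthonormal columns, and let Z_F be any minimizer over orthogonal Z of ‖Q_t − V Z‖_F. Then ‖Q_t − V Z_F‖₂ ≤ 2√r · ‖V_⊥^T Q_t‖₂, where V_⊥ spans the orthogonal complement of span(V). -/
open Matrix BigOperators

/-!
Since the Frobenius norm dominates the spectral norm and `Z_F` is Frobenius-optimal, it suffices to
exhibit one orthogonal `Z` with `‖Q - V Z‖_F ≤ √2 ‖N‖_F`, where `M = Vᵀ Q` and `N = V_⊥ᵀ Q`
satisfy `Mᵀ M + Nᵀ N = 1`. For orthogonal `Z`, `‖Q - V Z‖_F² = 2r - 2 tr(Zᵀ M)`. Taking for `Z` the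
orthogonal polar factor of `M` gives `tr(Zᵀ M) = ∑ σᵢ ≥ ∑ σᵢ² = tr(Mᵀ M)`, because the singular
values `σᵢ` of `M` are at most `1`; hence `‖Q - V Z‖_F² ≤ 2 tr(Nᵀ N) = 2 ‖N‖_F² ≤ 2r ‖N‖₂²`.
-/

section Norms

variable {m n : ℕ}

theorem frobNorm_sq (A : Matrix (Fin m) (Fin n) ℝ) : frobNorm A ^ 2 = (Aᵀ * A).trace := by
  rw [frobNorm, Real.sq_sqrt (by positivity), trace, Finset.sum_comm]
  simp only [diag, mul_apply, transpose_apply, pow_two]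

theorem sqrt_sum_sq_mulVec_le_frobNorm (A : Matrix (Fin m) (Fin n) ℝ) {x : Fin n → ℝ}
    (hx : ∑ j, x j ^ 2 = 1) : √(∑ i, (A *ᵥ x) i ^ 2) ≤ frobNorm A := by
  refine Real.sqrt_le_sqrt (Finset.sum_le_sum fun i _ => ?_)
  simpa [hx, mulVec, dotProduct] using Finset.sum_mul_sq_le_sq_mul_sq Finset.univ (A i) x

theorem bddAbove_specNorm (A : Matrix (Fin m) (Fin n) ℝ) :
    BddAbove (Set.range fun x : {x : Fin n → ℝ // ∑ j, x j ^ 2 = 1} =>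
      √(∑ i, (A *ᵥ x.1) i ^ 2)) := by
  refine ⟨frobNorm A, ?_⟩
  rintro _ ⟨x, rfl⟩
  exact sqrt_sum_sq_mulVec_le_frobNorm A x.2

theorem specNorm_nonneg (A : Matrix (Fin m) (Fin n) ℝ) : 0 ≤ specNorm A :=
  Real.iSup_nonneg fun _ => Real.sqrt_nonneg _

theorem specNorm_le_frobNorm (A : Matrix (Fin m) (Fin n) ℝ) : specNorm A ≤ frobNorm A :=
  Real.iSup_le (fun x => sqrt_sum_sq_mulVec_le_frobNorm A x.2) (Real.sqrt_nonneg _)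

theorem sum_sq_col_le_specNorm_sq (A : Matrix (Fin m) (Fin n) ℝ) (j : Fin n) :
    ∑ i, A i j ^ 2 ≤ specNorm A ^ 2 := by
  have hunit : ∑ k, (Pi.single j 1 : Fin n → ℝ) k ^ 2 = 1 := by
    simp [Pi.single_apply]
  have hcol : √(∑ i, A i j ^ 2) ≤ specNorm A := by
    simpa [specNorm, mulVec_single] using le_ciSup (bddAbove_specNorm A) ⟨Pi.single j 1, hunit⟩
  exact (Real.sqrt_le_left (specNorm_nonneg A)).mp hcol

theorem frobNorm_le_sqrt_mul_specNorm (A : Matrix (Fin m) (Fin n) ℝ) :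
    frobNorm A ≤ √n * specNorm A := by
  calc frobNorm A = √(∑ j, ∑ i, A i j ^ 2) := by rw [frobNorm, Finset.sum_comm]
    _ ≤ √(n * specNorm A ^ 2) := by
        gcongr
        simpa using Finset.sum_le_sum fun j (_ : j ∈ Finset.univ) =>
          sum_sq_col_le_specNorm_sq A j
    _ = √n * specNorm A := by rw [Real.sqrt_mul (by positivity), Real.sqrt_sq (specNorm_nonneg A)]

end Norms

theorem frobNorm_sub_mul_sq {n r : ℕ} {V Q : Matrix (Fin n) (Fin r) ℝ}
    {W : Matrix (Fin r) (Fin r) ℝ} (hV : Vᵀ * V = 1) (hQ : Qᵀ * Q = 1) (hW : Wᵀ * W = 1) :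
    frobNorm (Q - V * W) ^ 2 = 2 * r - 2 * (Wᵀ * (Vᵀ * Q)).trace := by
  have hexpand : (Q - V * W)ᵀ * (Q - V * W) = 1 - (Wᵀ * (Vᵀ * Q))ᵀ - Wᵀ * (Vᵀ * Q) + 1 := by
    simp only [transpose_sub, transpose_mul, transpose_transpose, Matrix.sub_mul, Matrix.mul_sub,
      Matrix.mul_assoc, hQ]
    rw [← Matrix.mul_assoc Vᵀ, hV, Matrix.one_mul, hW]
    abel
  rw [frobNorm_sq, hexpand, trace_add, trace_sub, trace_sub, trace_transpose, trace_one,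
    Fintype.card_fin]
  ring

theorem card_le_card_of_transpose_mul_self_eq_one {K m k : Type*} [CommRing K]
    [StrongRankCondition K] [Fintype m] [Fintype k] [DecidableEq k] {V : Matrix m k K}
    (hV : Vᵀ * V = 1) :
    Fintype.card k ≤ Fintype.card m := by
  calc Fintype.card k = (Vᵀ * V).rank := by rw [hV, rank_one]
    _ ≤ Vᵀ.rank := rank_mul_le_left _ _
    _ ≤ Fintype.card m := rank_le_card_width _

theorem mul_transpose_add_mul_transpose_eq_one {K m k l : Type*} [CommRing K] [Fintype m]
    [Fintype k] [Fintype l] [DecidableEq m] [DecidableEq k] [DecidableEq l]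
    {V : Matrix m k K} {W : Matrix m l K} (hV : Vᵀ * V = 1) (hW : Wᵀ * W = 1)
    (hWV : Wᵀ * V = 0) (hcard : Fintype.card k + Fintype.card l = Fintype.card m) :
    V * Vᵀ + W * Wᵀ = 1 := by
  have hVW : Vᵀ * W = 0 := by
    rw [← transpose_transpose (Vᵀ * W), transpose_mul, transpose_transpose, hWV, transpose_zero]
  have e : m ≃ k ⊕ l := Fintype.equivOfCardEq (by rw [Fintype.card_sum, hcard])
  rw [← fromCols_mul_fromRows, fromCols_mul_fromRows_eq_one_comm e, fromRows_mul_fromCols, hV, hW,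
    hWV, hVW, fromBlocks_one]

theorem exists_orthonormalBasis_inner_self_eq_norm {ι E : Type*} [Fintype ι]
    [NormedAddCommGroup E] [InnerProductSpace ℝ E] [FiniteDimensional ℝ E]
    (hcard : Module.finrank ℝ E = Fintype.card ι) {c : ι → E}
    (hc : Pairwise fun i j => inner ℝ (c i) (c j) = 0) :
    ∃ b : OrthonormalBasis ι ℝ E, ∀ i, inner ℝ (b i) (c i) = ‖c i‖ := by
  set v : ι → E := fun i => ‖c i‖⁻¹ • c i
  have hv : Orthonormal ℝ ({i | c i ≠ 0}.domRestrict v) := by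
    refine ⟨fun i => norm_smul_inv_norm i.2, fun i j hij => ?_⟩
    simp [v, real_inner_smul_left, real_inner_smul_right, hc (Subtype.coe_ne_coe.mpr hij)]
  obtain ⟨b, hb⟩ := hv.exists_orthonormalBasis_extension_of_card_eq hcard
  refine ⟨b, fun i => ?_⟩
  by_cases hi : c i = 0
  · simp [hi]
  · rw [hb i hi, real_inner_smul_left, real_inner_self_eq_norm_sq]
    field_simp [norm_ne_zero_iff.mpr hi]

section Polar

variable {ι : Type*} [Fintype ι] [DecidableEq ι]

theorem exists_orthogonal_diag_transpose_mul_eq_sqrt {B : Matrix ι ι ℝ} {d : ι → ℝ}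
    (hB : Bᵀ * B = diagonal d) :
    ∃ U : Matrix ι ι ℝ, Uᵀ * U = 1 ∧ ∀ i, (Uᵀ * B) i i = √(d i) := by
  set c : ι → EuclideanSpace ℝ ι := fun i => WithLp.toLp 2 (Bᵀ i)
  have hinner : ∀ i j, inner ℝ (c i) (c j) = diagonal d i j := by
    intro i j
    rw [← hB, mul_apply', EuclideanSpace.inner_toLp_toLp, star_trivial, dotProduct_comm]
    rfl
  have hnorm : ∀ i, ‖c i‖ = √(d i) := by
    intro i
    rw [norm_eq_sqrt_real_inner, hinner, diagonal_apply_eq]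
  obtain ⟨b, hb⟩ := exists_orthonormalBasis_inner_self_eq_norm (finrank_euclideanSpace (𝕜 := ℝ))
    (c := c) fun i j hij => (hinner i j).trans (diagonal_apply_ne _ hij)
  set U := (EuclideanSpace.basisFun ι ℝ).toBasis.toMatrix b.toBasis
  refine ⟨U, ?_, fun i => ?_⟩
  · have := (EuclideanSpace.basisFun ι ℝ).toMatrix_orthonormalBasis_conjTranspose_mul_self b
    rwa [conjTranspose_eq_transpose_of_trivial] at this
  · rw [← hnorm, ← hb, mul_apply', EuclideanSpace.inner_eq_star_dotProduct, star_trivial,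
      dotProduct_comm]
    rfl

theorem Matrix.IsHermitian.exists_orthogonal_transpose_mul_mul_eq_diagonal
    {A : Matrix ι ι ℝ} (hA : A.IsHermitian) :
    ∃ P : Matrix ι ι ℝ, Pᵀ * P = 1 ∧ Pᵀ * A * P = diagonal hA.eigenvalues := by
  refine ⟨hA.eigenvectorUnitary, ?_, ?_⟩
  · simpa [star_eq_conjTranspose, conjTranspose_eq_transpose_of_trivial] using
      (mem_unitaryGroup_iff'.mp hA.eigenvectorUnitary.2)
  · simpa [star_eq_conjTranspose, conjTranspose_eq_transpose_of_trivial] using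
      hA.conjStarAlgAut_star_eigenvectorUnitary

theorem exists_orthogonal_trace_transpose_mul_self_le {M : Matrix ι ι ℝ}
    (hM : (1 - Mᵀ * M).PosSemidef) :
    ∃ Z : Matrix ι ι ℝ, Zᵀ * Z = 1 ∧ (Mᵀ * M).trace ≤ (Zᵀ * M).trace := by
  have hA : (Mᵀ * M).IsHermitian := by
    simp [IsHermitian, conjTranspose_eq_transpose_of_trivial]
  set d := hA.eigenvalues
  obtain ⟨P, hPP, hdiag⟩ := hA.exists_orthogonal_transpose_mul_mul_eq_diagonal
  have hPP' : P * Pᵀ = 1 := mul_eq_one_comm.mp hPP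
  have hB : (M * P)ᵀ * (M * P) = diagonal d := by
    rw [← hdiag, transpose_mul]; simp only [Matrix.mul_assoc]
  obtain ⟨U, hUU, hUB⟩ := exists_orthogonal_diag_transpose_mul_eq_sqrt hB
  have hd_nonneg : ∀ i, 0 ≤ d i := fun i => by
    rw [← diagonal_apply_eq d i, ← hB, mul_apply]
    exact Finset.sum_nonneg fun k _ => mul_self_nonneg _
  have hd_le_one : ∀ i, d i ≤ 1 := fun i => by
    have := (hM.conjTranspose_mul_mul_same P).diag_nonneg (i := i)
    rwa [conjTranspose_eq_transpose_of_trivial, Matrix.mul_sub, Matrix.sub_mul, Matrix.mul_one,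
      hPP, hdiag, Matrix.sub_apply, one_apply_eq, diagonal_apply_eq, sub_nonneg] at this
  -- `U * Pᵀ` is the orthogonal polar factor of `M`, and the `d i ∈ [0, 1]` are the squared
  -- singular values of `M`.
  refine ⟨U * Pᵀ, ?_, ?_⟩
  · rw [transpose_mul, transpose_transpose, Matrix.mul_assoc, ← Matrix.mul_assoc Uᵀ, hUU,
      Matrix.one_mul, hPP']
  calc (Mᵀ * M).trace = (Pᵀ * (Mᵀ * M) * P).trace := by
        rw [trace_mul_comm _ P, ← Matrix.mul_assoc, hPP', Matrix.one_mul]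
    _ = ∑ i, d i := by rw [hdiag, trace_diagonal]
    _ ≤ ∑ i, √(d i) := Finset.sum_le_sum fun i _ =>
        Real.le_sqrt_of_sq_le (by nlinarith [hd_nonneg i, hd_le_one i])
    _ = (Uᵀ * (M * P)).trace := by simp only [trace, diag, hUB]
    _ = ((U * Pᵀ)ᵀ * M).trace := by
        rw [transpose_mul, transpose_transpose, Matrix.mul_assoc, trace_mul_comm P,
          Matrix.mul_assoc]

end Polar

theorem procrustes_solution_spec_bound_general {n r : ℕ}
    (V Qt : Matrix (Fin n) (Fin r) ℝ) (Vp : Matrix (Fin n) (Fin (n - r)) ℝ)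
    (ZF : Matrix (Fin r) (Fin r) ℝ)
    (hV : Vᵀ * V = 1) (hQt : Qtᵀ * Qt = 1) (hVp : Vpᵀ * Vp = 1)
    (hperp : Vpᵀ * V = 0)
    (hmin : ∀ Z : Matrix (Fin r) (Fin r) ℝ, Zᵀ * Z = 1 →
      frobNorm (Qt - V * ZF) ≤ frobNorm (Qt - V * Z)) :
    specNorm (Qt - V * ZF) ≤ 2 * Real.sqrt r * specNorm (Vpᵀ * Qt) := by
  have hrn : r ≤ n := by simpa using card_le_card_of_transpose_mul_self_eq_one hV
  have hcompl := mul_transpose_add_mul_transpose_eq_one hV hVp hperp (by simp; omega)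
  set M := Vᵀ * Qt
  set N := Vpᵀ * Qt
  have hMN : Mᵀ * M + Nᵀ * N = 1 := by
    have : Mᵀ * M + Nᵀ * N = Qtᵀ * ((V * Vᵀ + Vp * Vpᵀ) * Qt) := by
      simp only [M, N, transpose_mul, transpose_transpose, Matrix.add_mul, Matrix.mul_add,
        Matrix.mul_assoc]
    rw [this, hcompl, Matrix.one_mul, hQt]
  obtain ⟨Z, hZ, htr⟩ := exists_orthogonal_trace_transpose_mul_self_le (M := M) <| by
    rw [← hMN, add_sub_cancel_left]
    simpa [conjTranspose_eq_transpose_of_trivial] using posSemidef_conjTranspose_mul_self N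
  have hres : frobNorm (Qt - V * Z) ^ 2 ≤ (√2 * frobNorm N) ^ 2 := by
    have htrace : (Mᵀ * M).trace + (Nᵀ * N).trace = r := by
      rw [← trace_add, hMN, trace_one, Fintype.card_fin]
    rw [frobNorm_sub_mul_sq hV hQt hZ, mul_pow, Real.sq_sqrt zero_le_two, frobNorm_sq]
    linarith
  calc specNorm (Qt - V * ZF) ≤ frobNorm (Qt - V * ZF) := specNorm_le_frobNorm _
    _ ≤ frobNorm (Qt - V * Z) := hmin Z hZ
    _ ≤ √2 * frobNorm N :=
        (pow_le_pow_iff_left₀ (Real.sqrt_nonneg _)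
          (mul_nonneg (Real.sqrt_nonneg _) (Real.sqrt_nonneg _)) two_ne_zero).mp hres
    _ ≤ √2 * (√r * specNorm N) := by gcongr; exact frobNorm_le_sqrt_mul_specNorm N
    _ ≤ 2 * √r * specNorm N := by
        have hsqrt2 : √2 ≤ 2 := Real.sqrt_le_iff.mpr ⟨zero_le_two, by norm_num⟩
        rw [← mul_assoc]
        exact mul_le_mul_of_nonneg_right
          (mul_le_mul_of_nonneg_right hsqrt2 (Real.sqrt_nonneg _)) (specNorm_nonneg N)

/-- the Procrustes solution satisfies
‖Q_t − V Z_F‖₂ ≤ 2√r ‖V_⊥ᵀ Q_t‖₂. -/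
theorem procrustes_solution_spec_bound {n r : ℕ}
    (V Qt : Matrix (Fin n) (Fin r) ℝ) (Vp : Matrix (Fin n) (Fin (n - r)) ℝ)
    (ZF : Matrix (Fin r) (Fin r) ℝ)
    (hV : Vᵀ * V = 1) (hQt : Qtᵀ * Qt = 1) (hVp : Vpᵀ * Vp = 1)
    (hperp : Vpᵀ * V = 0)
    (hZF : ZFᵀ * ZF = 1)
    (hmin : ∀ Z : Matrix (Fin r) (Fin r) ℝ, Zᵀ * Z = 1 →
      frobNorm (Qt - V * ZF) ≤ frobNorm (Qt - V * Z)) :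
    specNorm (Qt - V * ZF) ≤ 2 * Real.sqrt r * specNorm (Vpᵀ * Qt) :=
  procrustes_solution_spec_bound_general V Qt Vp ZF hV hQt hVp hperp hmin
end
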